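/- arXiv:1611.08140 — 2 statements merged into one kernel-verified Lean document; each statement's English description precedes it below -/
import Mathlib

section
/- Let κ be an uncountable regular cardinal with 2^{<κ} = κ. Then cof(𝓜_κ) ≤ max{𝔡_κ, non(𝓜_κ)}. -/
namespace GenCichon

noncomputable section

open Cardinal Set Ordinal

variable (κ : Cardinal.{0})

/-- The ordinals below `κ`, i.e. the cardinal `κ` viewed as a set of ordinals. -/
abbrev Idx : Type 1 := ↥(Set.Iio κ.ord)

/-- The generalized Cantor space `2^κ`. -/
abbrev GenCantor : Type 1 := Idx κ → Bool

/-- The generalized Baire space `κ^κ`. -/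
abbrev GenBaire : Type 1 := Idx κ → Idx κ

/-- The basic open (cylinder) set `[σ]` determined by the element `σ` of `2^{<κ}`
with domain `[0, δ)` (values of `σ` at or above `δ` are irrelevant). -/
def cyl (δ : Ordinal) (σ : Ordinal → Bool) : Set (GenCantor κ) :=
  { x | ∀ β : Idx κ, β.1 < δ → x β = σ β.1 }

/-- `A ⊆ 2^κ` is nowhere dense: every basic open set `[σ]`, `σ ∈ 2^{<κ}`, has a
basic open refinement `[σ'] ⊆ [σ]` disjoint from `A`. -/
def IsNwd (A : Set (GenCantor κ)) : Prop :=
  ∀ δ < κ.ord, ∀ σ : Ordinal → Bool, ∃ δ', δ ≤ δ' ∧ δ' < κ.ord ∧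
    ∃ σ' : Ordinal → Bool, (∀ β < δ, σ' β = σ β) ∧ cyl κ δ' σ' ∩ A = ∅

/-- `A ⊆ 2^κ` is `κ`-meager: a union of `κ` many nowhere dense sets. -/
def IsKMeager (A : Set (GenCantor κ)) : Prop :=
  ∃ B : Idx κ → Set (GenCantor κ), (∀ i, IsNwd κ (B i)) ∧ A = ⋃ i, B i

/-- The covering number of the `κ`-meager ideal. -/
def covM : Cardinal.{1} :=
  sInf { c : Cardinal.{1} | ∃ J : Set (Set (GenCantor κ)),
    (∀ A ∈ J, IsKMeager κ A) ∧ ⋃₀ J = Set.univ ∧ c = #J }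

/-- The uniformity number of the `κ`-meager ideal. -/
def nonM : Cardinal.{1} :=
  sInf { c : Cardinal.{1} | ∃ X : Set (GenCantor κ), ¬ IsKMeager κ X ∧ c = #X }

/-- The additivity number of the `κ`-meager ideal. -/
def addM : Cardinal.{1} :=
  sInf { c : Cardinal.{1} | ∃ J : Set (Set (GenCantor κ)),
    (∀ A ∈ J, IsKMeager κ A) ∧ ¬ IsKMeager κ (⋃₀ J) ∧ c = #J }

/-- The cofinality number of the `κ`-meager ideal. -/
def cofM : Cardinal.{1} :=
  sInf { c : Cardinal.{1} | ∃ J : Set (Set (GenCantor κ)),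
    (∀ A ∈ J, IsKMeager κ A) ∧ (∀ A, IsKMeager κ A → ∃ B ∈ J, A ⊆ B) ∧ c = #J }

/-- `g` eventually dominates `f` (`f <* g`). -/
def EvDom (f g : GenBaire κ) : Prop :=
  ∃ α : Idx κ, ∀ β : Idx κ, α < β → f β < g β

/-- The unbounding number `𝔟_κ`. -/
def bK : Cardinal.{1} :=
  sInf { c : Cardinal.{1} | ∃ F : Set (GenBaire κ),
    (∀ g : GenBaire κ, ∃ f ∈ F, ¬ EvDom κ f g) ∧ c = #F }

/-- The dominating number `𝔡_κ`. -/
def dK : Cardinal.{1} :=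
  sInf { c : Cardinal.{1} | ∃ F : Set (GenBaire κ),
    (∀ g : GenBaire κ, ∃ f ∈ F, EvDom κ g f) ∧ c = #F }

/-- `f` and `g` are eventually different (`f ≠* g`). -/
def EvDiff (f g : GenBaire κ) : Prop :=
  #{ α : Idx κ | f α = g α } < Cardinal.lift.{1} κ

/-- `𝔟_κ(≠*)`: least size of a family such that every `g` is cofinally matching
with some member of it. -/
def bNeq : Cardinal.{1} :=
  sInf { c : Cardinal.{1} | ∃ F : Set (GenBaire κ),
    (∀ g : GenBaire κ, ∃ f ∈ F, ¬ EvDiff κ f g) ∧ c = #F }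

/-- `𝔡_κ(≠*)`: least size of a family such that every `g` is eventually different
from some member of it. -/
def dNeq : Cardinal.{1} :=
  sInf { c : Cardinal.{1} | ∃ F : Set (GenBaire κ),
    (∀ g : GenBaire κ, ∃ f ∈ F, EvDiff κ f g) ∧ c = #F }

/-- An interval partition of `κ`: a strictly increasing continuous sequence
`(pts α : α < κ)` of ordinals below `κ` with `pts 0 = 0`; the `α`-th interval is
`[pts α, pts (α+1))`.  (Values at or above `κ` are normalized to `0`, so that an
interval partition is determined by its restriction below `κ`.) -/
structure IntervalPartition where
  pts : Ordinal → Ordinal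
  zero : pts 0 = 0
  lt_ord : ∀ α < κ.ord, pts α < κ.ord
  strictMono : ∀ α β : Ordinal, α < β → β < κ.ord → pts α < pts β
  isCont : ∀ δ < κ.ord, Order.IsSuccLimit δ → pts δ = ⨆ β : ↥(Set.Iio δ), pts β.1
  eq_zero_of_le : ∀ α, κ.ord ≤ α → pts α = 0

/-- The `β`-th interval of `J` is included in the `α`-th interval of `I`. -/
def SubIntv (J : IntervalPartition κ) (β : Ordinal) (I : IntervalPartition κ)
    (α : Ordinal) : Prop :=
  I.pts α ≤ J.pts β ∧ J.pts (β + 1) ≤ I.pts (α + 1)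

/-- `I` dominates `J` (`J ≤* I`): from some point on, every interval of `I`
contains an interval of `J`. -/
def IPDom (J I : IntervalPartition κ) : Prop :=
  ∃ γ < κ.ord, ∀ α, γ < α → α < κ.ord → ∃ β < κ.ord, SubIntv κ J β I α

/-- `y` matches the `κ`-chopped function `(x, I)`: `y` and `x` agree on cofinally
many intervals of `I`. -/
def Matches (y x : GenCantor κ) (I : IntervalPartition κ) : Prop :=
  ∀ γ < κ.ord, ∃ α, γ ≤ α ∧ α < κ.ord ∧
    ∀ β : Idx κ, I.pts α ≤ β.1 → β.1 < I.pts (α + 1) → y β = x β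

/-- The set of elements of `2^κ` matching the `κ`-chopped function `(x, I)`. -/
def MatchSet (x : GenCantor κ) (I : IntervalPartition κ) : Set (GenCantor κ) :=
  { y | Matches κ y x I }

/-- `h ∈ κ^κ` tends to `κ`: `lim_{α → κ} h(α) = κ`. -/
def TendsToTop (h : GenBaire κ) : Prop :=
  ∀ γ : Idx κ, ∃ α : Idx κ, ∀ β : Idx κ, α ≤ β → γ ≤ h β

/-- `φ` is an `h`-slalom: `φ(α)` is a subset of `κ` of cardinality `|h(α)|`. -/
def IsSlalom (h : GenBaire κ) (φ : Idx κ → Set (Idx κ)) : Prop :=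
  ∀ α : Idx κ, #(φ α) = Cardinal.lift.{1} (h α).1.card

/-- The (total) slalom `φ` localizes `f` (`f ∈* φ`). -/
def Localizes (φ : Idx κ → Set (Idx κ)) (f : GenBaire κ) : Prop :=
  #{ α : Idx κ | f α ∉ φ α } < Cardinal.lift.{1} κ

/-- `𝔟_h(∈*)`. -/
def bLoc (h : GenBaire κ) : Cardinal.{1} :=
  sInf { c : Cardinal.{1} | ∃ F : Set (GenBaire κ),
    (∀ φ : Idx κ → Set (Idx κ), IsSlalom κ h φ → ∃ f ∈ F, ¬ Localizes κ φ f) ∧ c = #F }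

/-- `𝔡_h(∈*)`. -/
def dLoc (h : GenBaire κ) : Cardinal.{1} :=
  sInf { c : Cardinal.{1} | ∃ Φ : Set (Idx κ → Set (Idx κ)),
    (∀ φ ∈ Φ, IsSlalom κ h φ) ∧ (∀ f : GenBaire κ, ∃ φ ∈ Φ, Localizes κ φ f) ∧ c = #Φ }

/-- A partial `h`-slalom: a slalom whose domain is a subset of `κ` of cardinality `κ`.
(The values outside the domain are normalized to `∅`.) -/
structure PartialSlalom (h : GenBaire κ) where
  dom : Set (Idx κ)
  dom_card : #dom = Cardinal.lift.{1} κ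
  fn : Idx κ → Set (Idx κ)
  fn_card : ∀ α ∈ dom, #(fn α) = Cardinal.lift.{1} (h α).1.card
  eq_empty_of_not_mem : ∀ α ∉ dom, fn α = ∅

/-- The partial slalom `φ` localizes `f` (`f ∈* φ`). -/
def PLocalizes {h : GenBaire κ} (φ : PartialSlalom κ h) (f : GenBaire κ) : Prop :=
  #{ α : Idx κ | α ∈ φ.dom ∧ f α ∉ φ.fn α } < Cardinal.lift.{1} κ

/-- `𝔟_h(p∈*)`. -/
def bPLoc (h : GenBaire κ) : Cardinal.{1} :=
  sInf { c : Cardinal.{1} | ∃ F : Set (GenBaire κ),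
    (∀ φ : PartialSlalom κ h, ∃ f ∈ F, ¬ PLocalizes κ φ f) ∧ c = #F }

/-- `𝔡_h(p∈*)`. -/
def dPLoc (h : GenBaire κ) : Cardinal.{1} :=
  sInf { c : Cardinal.{1} | ∃ Φ : Set (PartialSlalom κ h),
    (∀ f : GenBaire κ, ∃ φ ∈ Φ, PLocalizes κ φ f) ∧ c = #Φ }

/-- `X ⊆ 2^κ` is open in the `<κ`-box topology. -/
def IsOpenK (X : Set (GenCantor κ)) : Prop :=
  ∀ x ∈ X, ∃ δ < κ.ord, { y : GenCantor κ | ∀ β : Idx κ, β.1 < δ → y β = x β } ⊆ X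

/-- `X ⊆ 2^κ` is dense: it meets every basic open set. -/
def IsDenseK (X : Set (GenCantor κ)) : Prop :=
  ∀ δ < κ.ord, ∀ σ : Ordinal → Bool, (cyl κ δ σ ∩ X).Nonempty

/-- Coordinatewise addition modulo 2 on `2^κ`. -/
def addMod2 (x y : GenCantor κ) : GenCantor κ := fun α => Bool.xor (x α) (y α)

/-- The identification of `σ ∈ 2^{<κ}` (with domain `[0, δ)`) with the element of
`2^κ` extending `σ` by `0`'s. -/
def extendZero (δ : Ordinal) (σ : Ordinal → Bool) : GenCantor κ :=
  fun α => if α.1 < δ then σ α.1 else false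

end

end GenCichon

/-!
Since `2^{<κ} = κ`, there is an enumeration `(sᵢ)_{i<κ}` of `2^{<κ}` in which every stem has
extensions of arbitrarily large index. For `y ∈ 2^κ` and `f ∈ κ^κ`, the set of `z` that
from some index on never extend `sᵢ` followed by `y` on `[|sᵢ|, f i)` is `κ`-meager.
Given `A = ⋃_{γ<κ} N_γ` with every `N_γ` nowhere dense, the `y` for which each `sᵢ ⌢ y` has a
neighbourhood `[(sᵢ ⌢ y) ↾ δ(i, γ)]` disjoint from `N_γ` form a comeager set, so every
non-meager `X` contains one. By regularity `b i = sup_{γ ≤ i} δ(i, γ) < κ`, and if `f` dominates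
`b` then `A` is contained in the meager set coded by `(y, f)`. So the sets coded by `X × F`, with
`X` non-meager and `F` dominating, are cofinal in `𝓜_κ`.
-/

namespace GenCichon

open Cardinal Set Ordinal

section

variable {κ : Cardinal.{0}}

lemma mk_idx : #(Idx κ) = lift.{1} κ := by
  simp

lemma add_one_lt_ord (hκ : ℵ₀ ≤ κ) {β : Ordinal} (h : β < κ.ord) : β + 1 < κ.ord := by
  rw [← Order.succ_eq_add_one]
  exact (isSuccLimit_ord hκ).succ_lt h

lemma mk_Iic_idx_lt (hκ : ℵ₀ ≤ κ) (i : Idx κ) : #(Iic i) < lift.{1} κ := by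
  let e : Iic i → Iio (i.1 + 1) := fun γ =>
    ⟨γ.1.1, Order.lt_add_one_iff.2 (show γ.1.1 ≤ i.1 from γ.2)⟩
  have he : Function.Injective e := fun a b h => by
    simpa [e, Subtype.ext_iff] using h
  calc #(Iic i) ≤ #(Iio (i.1 + 1)) := mk_le_of_injective he
    _ = lift.{1} (i.1 + 1).card := Cardinal.mk_Iio_ordinal _
    _ < lift.{1} κ := lift_lt.2 (lt_ord.1 (add_one_lt_ord hκ i.2))

lemma exists_le_of_isRegular (hreg : κ.IsRegular) (g : Idx κ → Ordinal)
    (hg : ∀ γ, g γ < κ.ord) (i : Idx κ) : ∃ b < κ.ord, ∀ γ ≤ i, g γ ≤ b := by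
  refine ⟨⨆ γ : Iic i, g γ, ?_,
    fun γ hγ => le_ciSup Ordinal.bddAbove_of_small (⟨γ, hγ⟩ : Iic i)⟩
  refine lift_iSup_lt_of_lt_cof ?_ fun γ => hg γ
  rw [← lift_cof, hreg.cof_ord]
  simpa using mk_Iic_idx_lt hreg.aleph0_le i

lemma IsNwd.mono {A B : Set (GenCantor κ)} (hB : IsNwd κ B) (h : A ⊆ B) : IsNwd κ A := by
  intro δ hδ σ
  obtain ⟨δ', hδδ', hδ', σ', hσ', hB⟩ := hB δ hδ σ
  exact ⟨δ', hδδ', hδ', σ', hσ', subset_empty_iff.1 (hB ▸ inter_subset_inter_right _ h)⟩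

lemma isNwd_empty : IsNwd κ ∅ :=
  fun δ hδ σ => ⟨δ, le_rfl, hδ, σ, fun _ _ => rfl, inter_empty _⟩

lemma isNwd_singleton (hκ : ℵ₀ ≤ κ) (w : GenCantor κ) : IsNwd κ {w} := by
  intro δ hδ σ
  refine ⟨δ + 1, le_self_add, add_one_lt_ord hκ hδ,
    fun β => if β < δ then σ β else !w ⟨δ, hδ⟩, fun β hβ => if_pos hβ, ?_⟩
  refine eq_empty_of_forall_notMem fun z ⟨hz, hzw⟩ => ?_
  have hδz := hz ⟨δ, hδ⟩ (lt_add_one δ)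
  dsimp only at hδz
  rw [if_neg (lt_irrefl δ), mem_singleton_iff.1 hzw] at hδz
  exact (Bool.eq_not_self _).1 hδz

lemma isKMeager_of_subset_iUnion {ι : Type 1} (hι : #ι ≤ lift.{1} κ)
    {W : ι → Set (GenCantor κ)} (hW : ∀ i, IsNwd κ (W i)) {A : Set (GenCantor κ)}
    (hA : A ⊆ ⋃ i, W i) : IsKMeager κ A := by
  obtain ⟨e⟩ : Nonempty (ι ↪ Idx κ) := by rwa [← le_def, mk_idx]
  refine ⟨fun k => {z ∈ A | ∃ i, e i = k ∧ z ∈ W i}, fun k => ?_, ?_⟩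
  · by_cases hk : ∃ i, e i = k
    · obtain ⟨i, rfl⟩ := hk
      exact (hW i).mono fun z ⟨_, j, hj, hz⟩ => e.injective hj ▸ hz
    · exact isNwd_empty.mono fun z ⟨_, j, hj, _⟩ => hk ⟨j, hj⟩
  · refine (iUnion_subset fun k z hz => hz.1).antisymm' fun z hz => ?_
    obtain ⟨i, hi⟩ := mem_iUnion.1 (hA hz)
    exact mem_iUnion.2 ⟨e i, hz, i, rfl, hi⟩

lemma isKMeager_of_mk_le (hκ : ℵ₀ ≤ κ) {X : Set (GenCantor κ)} (hX : #X ≤ lift.{1} κ) :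
    IsKMeager κ X :=
  isKMeager_of_subset_iUnion hX (fun x : X => isNwd_singleton hκ x)
    fun x hx => mem_iUnion.2 ⟨⟨x, hx⟩, rfl⟩

lemma aleph0_le_mk_of_not_isKMeager (hκ : ℵ₀ ≤ κ) {X : Set (GenCantor κ)}
    (hX : ¬ IsKMeager κ X) : ℵ₀ ≤ #X :=
  (aleph0_le_lift.2 hκ).trans (le_of_not_ge fun h => hX (isKMeager_of_mk_le hκ h))

lemma cyl_subset_cyl {δ δ' : Ordinal} {σ σ' : Ordinal → Bool} (hδ : δ ≤ δ')
    (hσ : ∀ β < δ, σ' β = σ β) : cyl κ δ' σ' ⊆ cyl κ δ σ :=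
  fun _ hx β hβ => (hx β (hβ.trans_le hδ)).trans (hσ β hβ)

variable (κ) in
/-- Values at ordinals `≥ κ` are junk (`false`); cylinders never read them. -/
noncomputable def splice (ℓ : Ordinal) (s : Ordinal → Bool) (y : GenCantor κ) :
    Ordinal → Bool :=
  fun β => if β < ℓ then s β else if h : β < κ.ord then y ⟨β, h⟩ else false

lemma splice_of_lt {ℓ β : Ordinal} (s : Ordinal → Bool) (y : GenCantor κ) (h : β < ℓ) :
    splice κ ℓ s y β = s β :=
  if_pos h

lemma splice_of_le {ℓ : Ordinal} (s : Ordinal → Bool) (y : GenCantor κ) {β : Idx κ}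
    (h : ℓ ≤ β.1) : splice κ ℓ s y β.1 = y β :=
  (if_neg (not_lt.2 h)).trans (dif_pos β.2)

variable (κ) in
def avoidSet (ℓ : Ordinal) (s : Ordinal → Bool) (N : Set (GenCantor κ)) : Set (GenCantor κ) :=
  {y | ∃ δ < κ.ord, cyl κ δ (splice κ ℓ s y) ∩ N = ∅}

lemma IsNwd.isNwd_compl_avoidSet {N : Set (GenCantor κ)} (hN : IsNwd κ N) {ℓ : Ordinal}
    (hℓ : ℓ < κ.ord) (s : Ordinal → Bool) : IsNwd κ (avoidSet κ ℓ s N)ᶜ := by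
  intro δ hδ τ
  obtain ⟨δ', hδδ', hδ', ρ, hρ, hρN⟩ :=
    hN (max δ ℓ) (max_lt hδ hℓ) fun β => if β < ℓ then s β else τ β
  refine ⟨δ', (le_max_left _ _).trans hδδ', hδ', fun β => if β < δ then τ β else ρ β,
    fun β hβ => if_pos hβ, ?_⟩
  refine eq_empty_of_forall_notMem fun y ⟨hy, hyN⟩ => hyN ⟨δ', hδ', subset_empty_iff.1 ?_⟩
  refine hρN ▸ inter_subset_inter_left _ (cyl_subset_cyl le_rfl fun β hβ => ?_)
  rcases lt_or_ge β ℓ with hβℓ | hℓβ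
  · rw [splice_of_lt _ _ hβℓ, hρ β (hβℓ.trans_le (le_max_right _ _)), if_pos hβℓ]
  · let b : Idx κ := ⟨β, hβ.trans hδ'⟩
    have hyβ : y b = if β < δ then τ β else ρ β := hy b hβ
    rw [show β = b.1 from rfl, splice_of_le s y hℓβ, hyβ]
    rcases lt_or_ge β δ with hβδ | hδβ
    · rw [if_pos hβδ, hρ β (hβδ.trans_le (le_max_left _ _)), if_neg (not_lt.2 hℓβ)]
    · exact if_neg (not_lt.2 hδβ)

lemma exists_mem_forall_avoidSet {X : Set (GenCantor κ)} (hX : ¬ IsKMeager κ X)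
    {ι : Type 1} (hι : #ι ≤ lift.{1} κ) (ℓ : ι → Ordinal) (hℓ : ∀ i, ℓ i < κ.ord)
    (s : ι → Ordinal → Bool) {N : ι → Set (GenCantor κ)} (hN : ∀ i, IsNwd κ (N i)) :
    ∃ y ∈ X, ∀ i, y ∈ avoidSet κ (ℓ i) (s i) (N i) := by
  by_contra! h
  refine hX (isKMeager_of_subset_iUnion hι (fun i => (hN i).isNwd_compl_avoidSet (hℓ i) (s i))
    fun y hy => ?_)
  obtain ⟨i, hi⟩ := h y hy
  exact mem_iUnion.2 ⟨i, hi⟩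

variable (κ) in
/-- An enumeration of `2^{<κ}` by `κ`; the `i`-th stem is `val i` restricted to `len i`. -/
structure StemEnum where
  len : Idx κ → Ordinal
  val : Idx κ → Ordinal → Bool
  len_lt : ∀ i, len i < κ.ord
  exists_eq : ∀ m < κ.ord, ∀ w : Ordinal → Bool,
    ∃ i, len i = m ∧ ∀ β < m, val i β = w β

lemma StemEnum.nonempty (hκ : ℵ₀ ≤ κ) (hsm : ∀ μ < κ, (2 : Cardinal) ^ μ ≤ κ) :
    Nonempty (StemEnum κ) := by
  let T := Σ l : Idx κ, (Iio l.1 → Bool)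
  have hT : #T ≤ #(Idx κ) := by
    calc #T = sum fun l : Idx κ => lift.{1} (2 ^ l.1.card) := by
          simp [T, mk_sigma, Cardinal.mk_Iio_ordinal, -Ordinal.lift_card]
      _ ≤ sum fun _ : Idx κ => lift.{1} κ :=
          sum_le_sum _ _ fun l => lift_le.2 (hsm _ (lt_ord.1 l.2))
      _ = #(Idx κ) := by
          rw [sum_const', mk_idx, mul_eq_self (aleph0_le_lift.2 hκ)]
  obtain ⟨e⟩ := (le_def T (Idx κ)).1 hT
  have : Nonempty T := ⟨⟨⟨0, (isSuccLimit_ord hκ).pos⟩, fun _ => false⟩⟩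
  obtain ⟨t, ht⟩ : ∃ t : Idx κ → T, t.Surjective :=
    ⟨_, Function.invFun_surjective e.injective⟩
  refine ⟨⟨fun i => (t i).1.1,
    fun i β => if h : β < (t i).1.1 then (t i).2 ⟨β, h⟩ else false,
    fun i => (t i).1.2, fun m hm w => ?_⟩⟩
  obtain ⟨i, hi⟩ := ht ⟨⟨m, hm⟩, fun b => w b⟩
  refine ⟨i, ?_⟩
  rw [hi]
  exact ⟨rfl, fun β hβ => dif_pos hβ⟩

lemma StemEnum.exists_gt (E : StemEnum κ) (hκ : ℵ₀ ≤ κ) {δ : Ordinal} (hδ : δ < κ.ord)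
    (w : Ordinal → Bool) (γ : Idx κ) :
    ∃ i, γ < i ∧ δ ≤ E.len i ∧ ∀ β < δ, E.val i β = w β := by
  choose e he using fun ι : Idx κ => E.exists_eq (δ + ι.1) (isPrincipal_add_ord hκ hδ ι.2) w
  have hδe : ∀ ι, δ ≤ E.len (e ι) := fun ι => by rw [(he ι).1]; exact le_self_add
  by_contra! hcon
  have he_le : ∀ ι, e ι ≤ γ := fun ι => not_lt.1 fun hlt => by
    obtain ⟨β, hβ, hne⟩ := hcon (e ι) hlt (hδe ι)
    exact hne ((he ι).2 β (hβ.trans_le ((hδe ι).trans_eq (he ι).1)))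
  have he_inj : Function.Injective fun ι => (⟨e ι, he_le ι⟩ : Iic γ) := fun a b h =>
    Subtype.ext <| add_left_cancel <|
      (he a).1.symm.trans ((congrArg (E.len ∘ Subtype.val) h).trans (he b).1)
  exact (mk_le_of_injective he_inj).not_gt (mk_idx ▸ mk_Iic_idx_lt hκ γ)

namespace StemEnum

variable (E : StemEnum κ)

def nonMatching (y : GenCantor κ) (f : GenBaire κ) (γ : Idx κ) : Set (GenCantor κ) :=
  {z | ∀ i, γ < i → z ∉ cyl κ (f i) (splice κ (E.len i) (E.val i) y)}

def eventuallyNonMatching (y : GenCantor κ) (f : GenBaire κ) : Set (GenCantor κ) :=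
  ⋃ γ, E.nonMatching y f γ

lemma isNwd_nonMatching (hκ : ℵ₀ ≤ κ) (y : GenCantor κ) (f : GenBaire κ) (γ : Idx κ) :
    IsNwd κ (E.nonMatching y f γ) := by
  intro δ hδ σ
  obtain ⟨i, hγi, hδi, hσi⟩ := E.exists_gt hκ hδ σ γ
  refine ⟨max (E.len i) (f i), hδi.trans (le_max_left _ _), max_lt (E.len_lt i) (f i).2,
    splice κ (E.len i) (E.val i) y,
    fun β hβ => (splice_of_lt _ _ (hβ.trans_le hδi)).trans (hσi β hβ), ?_⟩
  exact eq_empty_of_forall_notMem fun z ⟨hz, hzW⟩ =>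
    hzW i hγi (cyl_subset_cyl (le_max_right _ _) (fun _ _ => rfl) hz)

lemma isKMeager_eventuallyNonMatching (hκ : ℵ₀ ≤ κ) (y : GenCantor κ) (f : GenBaire κ) :
    IsKMeager κ (E.eventuallyNonMatching y f) :=
  ⟨E.nonMatching y f, E.isNwd_nonMatching hκ y f, rfl⟩

lemma exists_subset_eventuallyNonMatching (hreg : κ.IsRegular) {A : Set (GenCantor κ)}
    (hA : IsKMeager κ A) {X : Set (GenCantor κ)} (hX : ¬ IsKMeager κ X)
    {F : Set (GenBaire κ)} (hF : ∀ g : GenBaire κ, ∃ f ∈ F, EvDom κ g f) :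
    ∃ y ∈ X, ∃ f ∈ F, A ⊆ E.eventuallyNonMatching y f := by
  obtain ⟨N, hN, rfl⟩ := hA
  have hι : #(Idx κ × Idx κ) ≤ lift.{1} κ := by
    rw [mk_prod, Cardinal.lift_id, mk_idx, mul_eq_self (aleph0_le_lift.2 hreg.aleph0_le)]
  obtain ⟨y, hyX, hy⟩ := exists_mem_forall_avoidSet hX hι (fun p => E.len p.1)
    (fun p => E.len_lt p.1) (fun p => E.val p.1) (fun p => hN p.2)
  choose d hd hdN using hy
  choose b hb hbd using fun i =>
    exists_le_of_isRegular hreg (fun γ => d (i, γ)) (fun γ => hd _) i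
  obtain ⟨f, hfF, α, hα⟩ := hF fun i => ⟨b i, hb i⟩
  refine ⟨y, hyX, f, hfF, fun z hz => ?_⟩
  obtain ⟨γ, hzN⟩ := mem_iUnion.1 hz
  by_contra hzD
  have hzγα : z ∉ E.nonMatching y f (max γ α) := fun h => hzD (mem_iUnion.2 ⟨_, h⟩)
  simp only [nonMatching, mem_ofPred_eq, not_forall, not_not] at hzγα
  obtain ⟨i, hi, hzi⟩ := hzγα
  have hdf : d (i, γ) ≤ f i :=
    (hbd i γ ((le_max_left _ _).trans hi.le)).trans (hα i ((le_max_right _ _).trans_lt hi)).le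
  exact (hdN (i, γ)).subset ⟨cyl_subset_cyl hdf (fun _ _ => rfl) hzi, hzN⟩

end StemEnum

lemma cofM_le_mk_mul (hreg : κ.IsRegular) (hsm : ∀ μ < κ, (2 : Cardinal) ^ μ ≤ κ)
    {X : Set (GenCantor κ)} (hX : ¬ IsKMeager κ X) {F : Set (GenBaire κ)}
    (hF : ∀ g : GenBaire κ, ∃ f ∈ F, EvDom κ g f) :
    cofM κ ≤ #X * #F := by
  obtain ⟨E⟩ := StemEnum.nonempty hreg.aleph0_le hsm
  calc cofM κ ≤ #(image2 E.eventuallyNonMatching X F) := by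
        refine csInf_le' ⟨_, ?_, fun A hA => ?_, rfl⟩
        · rintro _ ⟨y, -, f, -, rfl⟩
          exact E.isKMeager_eventuallyNonMatching hreg.aleph0_le y f
        · obtain ⟨y, hy, f, hf, hAyf⟩ := E.exists_subset_eventuallyNonMatching hreg hA hX hF
          exact ⟨_, mem_image2_of_mem hy hf, hAyf⟩
    _ ≤ #X * #F := mk_image2_le

lemma cofM_le_one (h : ∀ A : Set (GenCantor κ), IsKMeager κ A) : cofM κ ≤ 1 :=
  csInf_le' ⟨{Set.univ}, fun A _ => h A, fun A _ => ⟨Set.univ, rfl, subset_univ A⟩,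
    (mk_singleton _).symm⟩

lemma exists_not_isKMeager_mk_eq_nonM (h : ∃ X : Set (GenCantor κ), ¬ IsKMeager κ X) :
    ∃ X : Set (GenCantor κ), ¬ IsKMeager κ X ∧ #X = nonM κ := by
  obtain ⟨X, hX, hXc⟩ :=
    csInf_mem (s := {c | ∃ X : Set (GenCantor κ), ¬ IsKMeager κ X ∧ c = #X})
      (let ⟨X, hX⟩ := h; ⟨_, X, hX, rfl⟩)
  exact ⟨X, hX, hXc.symm⟩

lemma exists_dominating_mk_eq_dK (hκ : ℵ₀ ≤ κ) :
    ∃ F : Set (GenBaire κ), (∀ g : GenBaire κ, ∃ f ∈ F, EvDom κ g f) ∧ #F = dK κ := by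
  have hdom : ∀ g : GenBaire κ, ∃ f ∈ Set.univ, EvDom κ g f := fun g =>
    ⟨fun β => ⟨(g β).1 + 1, add_one_lt_ord hκ (g β).2⟩, mem_univ _,
      ⟨0, (isSuccLimit_ord hκ).pos⟩, fun β _ => Subtype.mk_lt_mk.2 (lt_add_one _)⟩
  obtain ⟨F, hF, hFc⟩ := csInf_mem (s := {c | ∃ F : Set (GenBaire κ),
    (∀ g : GenBaire κ, ∃ f ∈ F, EvDom κ g f) ∧ c = #F}) ⟨_, Set.univ, hdom, rfl⟩
  exact ⟨F, hF, hFc.symm⟩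

end

theorem cofM_le_max_general (κ : Cardinal.{0})
    (hreg : κ.IsRegular)
    (hsm : ∀ μ < κ, (2 : Cardinal) ^ μ ≤ κ) :
    cofM κ ≤ max (dK κ) (nonM κ) := by
  obtain ⟨F, hF, hFd⟩ := exists_dominating_mk_eq_dK hreg.aleph0_le
  by_cases hall : ∀ A : Set (GenCantor κ), IsKMeager κ A
  · obtain ⟨f, hf, -⟩ := hF id
    calc cofM κ ≤ 1 := cofM_le_one hall
      _ ≤ #F := (mk_singleton f).symm.trans_le (mk_le_mk_of_subset (singleton_subset_iff.2 hf))
      _ ≤ max (dK κ) (nonM κ) := hFd ▸ le_max_left _ _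
  · push Not at hall
    obtain ⟨X, hX, hXn⟩ := exists_not_isKMeager_mk_eq_nonM hall
    calc cofM κ ≤ #X * #F := cofM_le_mk_mul hreg hsm hX hF
      _ ≤ max #X #F :=
        mul_le_max_of_aleph0_le_left (aleph0_le_mk_of_not_isKMeager hreg.aleph0_le hX)
      _ = max (dK κ) (nonM κ) := by rw [hXn, hFd, max_comm]

theorem cofM_le_max (κ : Cardinal.{0})
    (hreg : κ.IsRegular) (hunc : Cardinal.aleph0 < κ)
    (hsm : ∀ μ < κ, (2 : Cardinal) ^ μ ≤ κ) :
    cofM κ ≤ max (dK κ) (nonM κ) :=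
  cofM_le_max_general κ hreg hsm

end GenCichon
end

section
/- Let κ be a weakly inaccessible cardinal and let g, h ∈ κ^κ with lim_{α→κ} g(α) = lim_{α→κ} h(α) = κ. Then 𝔟_g(p∈*) = 𝔟_h(p∈*) and 𝔡_g(p∈*) = 𝔡_h(p∈*). -/
/-!
Suppose `ι : κ → κ` is injective, `|a(α)| ≤ |b(ι α)|` and every `b(ι α)` is infinite. A partial
`a`-slalom `ψ` becomes a partial `b`-slalom by putting `ψ(α) ∪ b(ι α)` at `ι α` (the union has
exactly the size `|b(ι α)|`), and it localizes `f` as soon as `ψ` localizes `f ∘ ι`. So `f ↦ f ∘ ι`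
turns a family unbounded for `b` into one unbounded for `a`, and pushing slaloms forward turns a
dominating family for `a` into one for `b`: `𝔟_a(p∈*) ≤ 𝔟_b(p∈*)` and `𝔡_b(p∈*) ≤ 𝔡_a(p∈*)`.
If `b` tends to `κ`, such an `ι` exists for every `a`: each `{β : b(β) ≥ max(a(α), ω)}` contains a
tail of `κ`, hence has size `κ`, and an injective choice from these sets is made by recursion
along `κ`. Applying this in both directions gives the equalities.
-/

namespace GenCichon

open Cardinal Set Function
open scoped Ordinal

universe u v

theorem exists_injective_forall_mem {α : Type u} {β : Type v} [LinearOrder α] [WellFoundedLT α]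
    (s : α → Set β) (hs : ∀ a, lift.{v} #(Iio a) < lift.{u} #(s a)) :
    ∃ f : α → β, Injective f ∧ ∀ a, f a ∈ s a := by
  have fresh : ∀ a (r : Iio a → β), ∃ b ∈ s a, b ∉ range r := by
    intro a r
    by_contra! hsub
    have hle := lift_le.2 (mk_le_mk_of_subset hsub)
    exact (hs a).not_ge (hle.trans mk_range_le_lift)
  let f : α → β := WellFoundedLT.fix fun a rec => (fresh a fun b => rec b.1 b.2).choose
  have hf : ∀ a, f a = (fresh a fun b => f b.1).choose := WellFoundedLT.fix_eq _
  have hf_fresh : ∀ a, ∀ b < a, f a ≠ f b := fun a b hba hab =>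
    (hf a ▸ (fresh a _).choose_spec.2) ⟨⟨b, hba⟩, hab.symm⟩
  refine ⟨f, fun a b hab => ?_, fun a => hf a ▸ (fresh a _).choose_spec.1⟩
  by_contra hne
  rcases lt_or_gt_of_ne hne with h | h
  · exact hf_fresh b a h hab.symm
  · exact hf_fresh a b h hab

theorem mk_union_eq_right {α : Type*} {s t : Set α} (ht : ℵ₀ ≤ #t) (hst : #s ≤ #t) :
    #(s ∪ t : Set α) = #t :=
  le_antisymm ((mk_union_le s t).trans ((add_le_add_left hst _).trans (add_eq_self ht).le))
    (mk_le_mk_of_subset subset_union_right)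

variable {κ : Cardinal.{0}}

theorem mk_Idx : #(Idx κ) = lift κ := by
  rw [Cardinal.mk_Iio_ordinal, card_ord]

theorem mk_Iio_Idx (γ : Idx κ) : #(Iio γ) = lift γ.1.card := by
  rw [← mk_image_eq Subtype.val_injective, image_subtype_val_Iio_Iio, Cardinal.mk_Iio_ordinal]

theorem mk_Ici_Idx (hκ : ℵ₀ ≤ κ) (γ : Idx κ) : #(Ici γ) = lift κ := by
  have : Infinite (Idx κ) := infinite_iff.2 (by rwa [mk_Idx, ← lift_aleph0.{1, 0}, lift_le])
  have hsmall : #(Iio γ) < #(Idx κ) := by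
    rw [mk_Iio_Idx, mk_Idx, lift_lt]
    exact lt_ord.1 γ.2
  rw [← compl_Iio, mk_compl_of_infinite _ hsmall, mk_Idx]

theorem TendsToTop.exists_injective_le_comp (hκ : ℵ₀ ≤ κ) {b : GenBaire κ}
    (hb : TendsToTop κ b) (a : GenBaire κ) :
    ∃ ι : Idx κ → Idx κ, Injective ι ∧ ∀ α, a α ≤ b (ι α) := by
  choose t ht using fun α => hb (a α)
  obtain ⟨ι, hι, hιt⟩ := exists_injective_forall_mem (fun α => Ici (t α)) fun α => by
    rw [mk_Iio_Idx, mk_Ici_Idx hκ, lift_id, lift_id, lift_lt]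
    exact lt_ord.1 α.2
  exact ⟨ι, hι, fun α => ht α _ (hιt α)⟩

namespace PartialSlalom

section Push

variable {a b : GenBaire κ} (ψ : PartialSlalom κ a) {ι : Idx κ → Idx κ} (hι : Injective ι)
  (hab : ∀ α, (a α).1.card ≤ (b (ι α)).1.card) (hb : ∀ α, ℵ₀ ≤ (b (ι α)).1.card)
include hι hab hb

open Classical in
noncomputable def push : PartialSlalom κ b where
  dom := ι '' ψ.dom
  dom_card := by rw [mk_image_eq hι, ψ.dom_card]
  fn := extend ι (fun α => if α ∈ ψ.dom then ψ.fn α ∪ Iio (b (ι α)) else ∅) fun _ => ∅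
  fn_card := by
    rintro _ ⟨α, hα, rfl⟩
    rw [hι.extend_apply, if_pos hα, mk_union_eq_right, mk_Iio_Idx]
    · rw [mk_Iio_Idx]
      exact aleph0_le_lift.2 (hb α)
    · rw [ψ.fn_card α hα, mk_Iio_Idx]
      exact lift_le.2 (hab α)
  eq_empty_of_not_mem := by
    intro δ hδ
    by_cases hδι : ∃ α, ι α = δ
    · obtain ⟨α, rfl⟩ := hδι
      rw [hι.extend_apply, if_neg fun hα => hδ ⟨α, hα, rfl⟩]
    · exact extend_apply' _ _ _ hδι

open Classical in
theorem push_fn_apply {α : Idx κ} (hα : α ∈ ψ.dom) :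
    (ψ.push hι hab hb).fn (ι α) = ψ.fn α ∪ Iio (b (ι α)) := by
  simp only [push, hι.extend_apply, if_pos hα]

theorem pLocalizes_push {f : GenBaire κ} (hf : PLocalizes κ ψ (f ∘ ι)) :
    PLocalizes κ (ψ.push hι hab hb) f := by
  have hbad : {δ | δ ∈ (ψ.push hι hab hb).dom ∧ f δ ∉ (ψ.push hι hab hb).fn δ} ⊆
      ι '' {α | α ∈ ψ.dom ∧ f (ι α) ∉ ψ.fn α} := by
    rintro δ ⟨⟨α, hα, rfl⟩, hfα⟩
    refine ⟨α, ⟨hα, fun hψ => hfα ?_⟩, rfl⟩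
    rw [push_fn_apply ψ hι hab hb hα]
    exact Or.inl hψ
  exact ((mk_le_mk_of_subset hbad).trans (mk_image_eq hι).le).trans_lt hf

end Push

theorem exists_not_pLocalizes {h : GenBaire κ} (φ : PartialSlalom κ h) :
    ∃ f : GenBaire κ, ¬ PLocalizes κ φ f := by
  have hsmall : ∀ α, #(φ.fn α) < #(Idx κ) := by
    intro α
    rw [mk_Idx]
    by_cases hα : α ∈ φ.dom
    · rw [φ.fn_card α hα, lift_lt]
      exact lt_ord.1 (h α).2
    · rw [φ.eq_empty_of_not_mem α hα, mk_eq_zero]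
      simpa using ord_pos.1 (zero_le.trans_lt α.2)
  have hex : ∀ α, ∃ x, x ∉ φ.fn α := fun α => by
    by_contra! hall
    exact (hsmall α).ne (by rw [eq_univ_of_forall hall, mk_univ])
  choose f hf using hex
  refine ⟨f, fun hloc => hloc.ne ?_⟩
  rw [← φ.dom_card]
  congr
  ext α
  exact and_iff_left (hf α)

end PartialSlalom

theorem TendsToTop.exists_pLocalizes (hκ : ℵ₀ < κ) {h : GenBaire κ} (hh : TendsToTop κ h)
    (f : GenBaire κ) : ∃ φ : PartialSlalom κ h, PLocalizes κ φ f := by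
  obtain ⟨α₀, hα₀⟩ := hh ⟨ω, omega0_lt_ord.2 hκ⟩
  refine ⟨⟨Ici α₀, mk_Ici_Idx hκ.le α₀, fun α => if α₀ ≤ α then insert (f α) (Iio (h α)) else ∅,
    fun α hα => ?_, fun α hα => if_neg hα⟩, ?_⟩
  · have hinf : ℵ₀ ≤ #(Iio (h α)) := by
      rw [mk_Iio_Idx, aleph0_le_lift, Ordinal.aleph0_le_card]
      exact hα₀ α hα
    have hone : #({f α} : Set (Idx κ)) ≤ #(Iio (h α)) := by
      simpa using one_le_aleph0.trans hinf
    rw [if_pos (show α₀ ≤ α from hα), insert_eq, mk_union_eq_right hinf hone, mk_Iio_Idx]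
  · refine (mk_le_mk_of_subset (t := ∅) ?_).trans_lt ?_
    · rintro α ⟨hα, hfα⟩
      refine hfα ?_
      dsimp only
      rw [if_pos (show α₀ ≤ α from hα)]
      exact mem_insert _ _
    · simpa using aleph0_pos.trans hκ

theorem TendsToTop.exists_injective_card_le (hκ : ℵ₀ < κ) {b : GenBaire κ}
    (hb : TendsToTop κ b) (a : GenBaire κ) :
    ∃ ι : Idx κ → Idx κ, Injective ι ∧ (∀ α, (a α).1.card ≤ (b (ι α)).1.card) ∧
      ∀ α, ℵ₀ ≤ (b (ι α)).1.card := by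
  let ω' : Idx κ := ⟨ω, omega0_lt_ord.2 hκ⟩
  obtain ⟨ι, hι, hιb⟩ := hb.exists_injective_le_comp hκ.le fun α => max (a α) ω'
  refine ⟨ι, hι, fun α => Ordinal.card_le_card ?_, fun α => Ordinal.aleph0_le_card.2 ?_⟩
  · exact Subtype.coe_le_coe.2 ((le_max_left (a α) ω').trans (hιb α))
  · exact Subtype.coe_le_coe.2 ((le_max_right (a α) ω').trans (hιb α))

section Comparison

variable {a b : GenBaire κ} {ι : Idx κ → Idx κ} (hι : Injective ι)
  (hab : ∀ α, (a α).1.card ≤ (b (ι α)).1.card) (hb : ∀ α, ℵ₀ ≤ (b (ι α)).1.card)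
include hι hab hb

theorem bPLoc_le_bPLoc_of_injective : bPLoc κ a ≤ bPLoc κ b := by
  unfold bPLoc
  refine le_csInf ⟨_, univ, fun φ => ?_, rfl⟩ ?_
  · obtain ⟨f, hf⟩ := φ.exists_not_pLocalizes
    exact ⟨f, mem_univ f, hf⟩
  rintro _ ⟨F, hF, rfl⟩
  refine (csInf_le' ?_).trans (mk_image_le (f := (· ∘ ι)) (s := F))
  refine ⟨_, fun ψ => ?_, rfl⟩
  obtain ⟨f, hfF, hf⟩ := hF (ψ.push hι hab hb)
  exact ⟨f ∘ ι, mem_image_of_mem _ hfF, fun hψ => hf (ψ.pLocalizes_push hι hab hb hψ)⟩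

theorem dPLoc_le_dPLoc_of_injective (hκ : ℵ₀ < κ) (ha : TendsToTop κ a) :
    dPLoc κ b ≤ dPLoc κ a := by
  unfold dPLoc
  refine le_csInf ⟨_, univ, fun f => ?_, rfl⟩ ?_
  · obtain ⟨φ, hφ⟩ := ha.exists_pLocalizes hκ f
    exact ⟨φ, mem_univ φ, hφ⟩
  rintro _ ⟨Ψ, hΨ, rfl⟩
  refine (csInf_le' ?_).trans (mk_image_le (f := (·.push hι hab hb)) (s := Ψ))
  refine ⟨_, fun f => ?_, rfl⟩
  obtain ⟨ψ, hψΨ, hψ⟩ := hΨ (f ∘ ι)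
  exact ⟨_, mem_image_of_mem _ hψΨ, ψ.pLocalizes_push hι hab hb hψ⟩

end Comparison

theorem pLoc_independent_of_h_general (κ : Cardinal.{0})
    (hunc : Cardinal.aleph0 < κ)
    (g h : GenBaire κ) (hg : TendsToTop κ g) (hh : TendsToTop κ h) :
    bPLoc κ g = bPLoc κ h ∧ dPLoc κ g = dPLoc κ h := by
  have compare : ∀ a b : GenBaire κ, TendsToTop κ a → TendsToTop κ b →
      bPLoc κ a ≤ bPLoc κ b ∧ dPLoc κ b ≤ dPLoc κ a := by
    intro a b ha hb
    obtain ⟨ι, hι, hab, hbω⟩ := hb.exists_injective_card_le hunc a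
    exact ⟨bPLoc_le_bPLoc_of_injective hι hab hbω, dPLoc_le_dPLoc_of_injective hι hab hbω hunc ha⟩
  exact ⟨(compare g h hg hh).1.antisymm (compare h g hh hg).1,
    (compare h g hh hg).2.antisymm (compare g h hg hh).2⟩

theorem pLoc_independent_of_h (κ : Cardinal.{0})
    (hreg : κ.IsRegular) (hunc : Cardinal.aleph0 < κ)
    (hlim : ∀ μ < κ, Order.succ μ < κ)
    (g h : GenBaire κ) (hg : TendsToTop κ g) (hh : TendsToTop κ h) :
    bPLoc κ g = bPLoc κ h ∧ dPLoc κ g = dPLoc κ h :=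
  pLoc_independent_of_h_general κ hunc g h hg hh

end GenCichon
end
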